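/- Let R be a cartesian relational doctrine satisfying Frobenius reciprocity. Then for every object X the equation (d_X ⊠ gr(Δ_X)) ; (gr(Δ_X)° ⊠ d_X) = gr(Δ_X)° ; gr(Δ_X) holds in R(X×X, X×X), where the composite on the left is taken modulo the canonical associativity isomorphism between X×(X×X) and (X×X)×X. -/

import Mathlib

open CategoryTheory

universe w w' v v' u u'

/-- A relational doctrine on a category `C` with fibres `P X Y` (posets):
a contravariant functor `(C^op × C^op) → Pos` with identities, composition and converse. -/
structure RelDoctrine (C : Type u) [Category.{v} C] (P : C → C → Type w)
    [∀ X Y : C, PartialOrder (P X Y)] where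
  reidx : ∀ {A X B Y : C}, (A ⟶ X) → (B ⟶ Y) → P X Y → P A B
  reidx_mono : ∀ {A X B Y : C} (f : A ⟶ X) (g : B ⟶ Y), Monotone (reidx f g)
  reidx_id : ∀ {X Y : C} (α : P X Y), reidx (𝟙 X) (𝟙 Y) α = α
  reidx_comp :
    ∀ {A X X' B Y Y' : C} (f : A ⟶ X) (f' : X ⟶ X') (g : B ⟶ Y) (g' : Y ⟶ Y') (α : P X' Y'),
      reidx (f ≫ f') (g ≫ g') α = reidx f g (reidx f' g' α)
  d : ∀ X : C, P X X
  comp : ∀ {X Y Z : C}, P X Y → P Y Z → P X Z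
  comp_mono : ∀ {X Y Z : C} {α α' : P X Y} {β β' : P Y Z},
      α ≤ α' → β ≤ β' → comp α β ≤ comp α' β'
  conv : ∀ {X Y : C}, P X Y → P Y X
  conv_mono : ∀ {X Y : C} {α α' : P X Y}, α ≤ α' → conv α ≤ conv α'
  d_le_reidx : ∀ {X Y : C} (f : X ⟶ Y), d X ≤ reidx f f (d Y)
  comp_reidx_le : ∀ {X A Y B Z W : C} (f : X ⟶ A) (g : Y ⟶ B) (h : Z ⟶ W)
      (α : P A B) (β : P B W),
      comp (reidx f g α) (reidx g h β) ≤ reidx f h (comp α β)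
  conv_reidx_le : ∀ {X A Y B : C} (f : X ⟶ A) (g : Y ⟶ B) (α : P A B),
      conv (reidx f g α) ≤ reidx g f (conv α)
  comp_assoc : ∀ {X Y Z W : C} (α : P X Y) (β : P Y Z) (γ : P Z W),
      comp α (comp β γ) = comp (comp α β) γ
  d_comp : ∀ {X Y : C} (α : P X Y), comp (d X) α = α
  comp_d : ∀ {X Y : C} (α : P X Y), comp α (d Y) = α
  conv_comp : ∀ {X Y Z : C} (α : P X Y) (β : P Y Z),
      conv (comp α β) = comp (conv β) (conv α)
  conv_d : ∀ X : C, conv (d X) = d X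
  conv_conv : ∀ {X Y : C} (α : P X Y), conv (conv α) = α

namespace RelDoctrine

variable {C : Type u} [Category.{v} C] {P : C → C → Type w} [∀ X Y : C, PartialOrder (P X Y)]

/-- The graph of an arrow `f : X ⟶ Y` is `R(f, id_Y)(d_Y)`. -/
def gr (D : RelDoctrine C P) {X Y : C} (f : X ⟶ Y) : P X Y :=
  D.reidx f (𝟙 Y) (D.d Y)

/-- `α` is functional: `α° ; α ≤ d_Y`. -/
def Functional (D : RelDoctrine C P) {X Y : C} (α : P X Y) : Prop :=
  D.comp (D.conv α) α ≤ D.d Y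

/-- `α` is total: `d_X ≤ α ; α°`. -/
def Total (D : RelDoctrine C P) {X Y : C} (α : P X Y) : Prop :=
  D.d X ≤ D.comp α (D.conv α)

/-- `α` is injective: `α ; α° ≤ d_X`. -/
def InjectiveRel (D : RelDoctrine C P) {X Y : C} (α : P X Y) : Prop :=
  D.comp α (D.conv α) ≤ D.d X

/-- `α` is surjective: `d_Y ≤ α° ; α`. -/
def SurjectiveRel (D : RelDoctrine C P) {X Y : C} (α : P X Y) : Prop :=
  D.d Y ≤ D.comp (D.conv α) α

/-- The kernel of an arrow `f` is `gr(f) ; gr(f)°`. -/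
def kernelOf (D : RelDoctrine C P) {X Y : C} (f : X ⟶ Y) : P X X :=
  D.comp (D.gr f) (D.conv (D.gr f))

/-- An `R`-equivalence relation: reflexive, symmetric, transitive. -/
def IsEquivRel (D : RelDoctrine C P) {X : C} (ρ : P X X) : Prop :=
  D.d X ≤ ρ ∧ D.conv ρ ≤ ρ ∧ D.comp ρ ρ ≤ ρ

/-- `q : X ⟶ W` is a quotient arrow of the equivalence relation `ρ` on `X`. -/
def IsQuotientArrow (D : RelDoctrine C P) {X W : C} (ρ : P X X) (q : X ⟶ W) : Prop :=
  ρ ≤ D.kernelOf q ∧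
    ∀ (Z : C) (f : X ⟶ Z), ρ ≤ D.kernelOf f → ∃! h : W ⟶ Z, f = q ≫ h

/-- The quotient arrow `q` of `ρ` is effective: `ρ = gr(q) ; gr(q)°`. -/
def Effective (D : RelDoctrine C P) {X W : C} (ρ : P X X) (q : X ⟶ W) : Prop :=
  ρ = D.kernelOf q

/-- The arrow `q` is descent: `d_W ≤ gr(q)° ; gr(q)`. -/
def Descent (D : RelDoctrine C P) {X W : C} (q : X ⟶ W) : Prop :=
  D.d W ≤ D.comp (D.conv (D.gr q)) (D.gr q)

/-- `D` has quotients: every equivalence relation admits an effective descent quotient arrow. -/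
def HasQuotients (D : RelDoctrine C P) : Prop :=
  ∀ (X : C) (ρ : P X X), D.IsEquivRel ρ →
    ∃ (W : C) (q : X ⟶ W), D.IsQuotientArrow ρ q ∧ D.Effective ρ q ∧ D.Descent q

/-- `f ≐ g` : the arrows `f, g` are `R`-equal, i.e. `d_X ≤ R(f,g)(d_Y)`. -/
def RExtEq (D : RelDoctrine C P) {X Y : C} (f g : X ⟶ Y) : Prop :=
  D.d X ≤ D.reidx f g (D.d Y)

/-- `D` is extensional: `R`-equal arrows are equal. -/
def Extensional (D : RelDoctrine C P) : Prop :=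
  ∀ (X Y : C) (f g : X ⟶ Y), D.RExtEq f g → f = g

/-- `D` is balanced: every bijective arrow is an isomorphism. -/
def BalancedDoc (D : RelDoctrine C P) : Prop :=
  ∀ (X Y : C) (f : X ⟶ Y), D.InjectiveRel (D.gr f) → D.SurjectiveRel (D.gr f) → IsIso f

/-- `Q` is `R`-projective with respect to quotient arrows. -/
def ProjectiveObj (D : RelDoctrine C P) (Q : C) : Prop :=
  ∀ (X Y : C) (f : Q ⟶ Y) (q : X ⟶ Y) (ρ : P X X),
    D.IsEquivRel ρ → D.IsQuotientArrow ρ q → ∃ h : Q ⟶ X, f = h ≫ q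

/-- Descent data with respect to equivalence relations `ρ` and `σ` : `ρ° ; α ; σ ≤ α`. -/
def Des (D : RelDoctrine C P) {X Y : C} (ρ : P X X) (σ : P Y Y) (α : P X Y) : Prop :=
  D.comp (D.comp (D.conv ρ) α) σ ≤ α

/-- The rule of unique choice: every functional total relation contains the graph of an arrow. -/
def RUC (D : RelDoctrine C P) : Prop :=
  ∀ (X Y : C) (α : P X Y), D.Functional α → D.Total α → ∃ f : X ⟶ Y, D.gr f ≤ α

end RelDoctrine

variable {C : Type u} [Category.{v} C] {P : C → C → Type w} [∀ X Y : C, PartialOrder (P X Y)]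

open CategoryTheory.Limits

/-- A cartesian structure on a relational doctrine. -/
structure CartStruct (D : RelDoctrine C P) [HasTerminal C] [HasBinaryProducts C] where
  rprod : ∀ {X Y A B : C}, P X Y → P A B → P (X ⨯ A) (Y ⨯ B)
  rprod_mono : ∀ {X Y A B : C} {α α' : P X Y} {β β' : P A B},
      α ≤ α' → β ≤ β' → rprod α β ≤ rprod α' β'
  rprod_natural : ∀ {X' X Y' Y A' A B' B : C} (f : X' ⟶ X) (g : Y' ⟶ Y)
      (h : A' ⟶ A) (k : B' ⟶ B) (α : P X Y) (β : P A B),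
      rprod (D.reidx f g α) (D.reidx h k β) =
        D.reidx (prod.map f h) (prod.map g k) (rprod α β)
  d_rprod : ∀ X Y : C, D.d (X ⨯ Y) = rprod (D.d X) (D.d Y)
  rprod_comp : ∀ {X Y Z X' Y' Z' : C} (α : P X Y) (β : P Y Z) (α' : P X' Y') (β' : P Y' Z'),
      D.comp (rprod α α') (rprod β β') = rprod (D.comp α β) (D.comp α' β')
  rprod_conv : ∀ {X Y A B : C} (α : P X Y) (β : P A B),
      D.conv (rprod α β) = rprod (D.conv α) (D.conv β)
  le_term : ∀ {X Y : C} (α : P X Y),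
      α ≤ D.comp (D.gr (terminal.from X)) (D.conv (D.gr (terminal.from Y)))
  le_fst : ∀ {X Y A B : C} (α : P X Y) (β : P A B),
      rprod α β ≤ D.comp (D.comp (D.gr (prod.fst : X ⨯ A ⟶ X)) α)
        (D.conv (D.gr (prod.fst : Y ⨯ B ⟶ Y)))
  le_snd : ∀ {X Y A B : C} (α : P X Y) (β : P A B),
      rprod α β ≤ D.comp (D.comp (D.gr (prod.snd : X ⨯ A ⟶ A)) β)
        (D.conv (D.gr (prod.snd : Y ⨯ B ⟶ B)))
  le_diag : ∀ {X Y : C} (α : P X Y),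
      α ≤ D.comp (D.comp (D.gr (diag X)) (rprod α α)) (D.conv (D.gr (diag Y)))

namespace CartStruct

variable [HasTerminal C] [HasBinaryProducts C] {D : RelDoctrine C P}

/-- The fibred binary meet `α ∧ β = gr(Δ) ; (α ⊠ β) ; gr(Δ)°`. -/
noncomputable def meet (CS : CartStruct D) {X Y : C} (α β : P X Y) : P X Y :=
  D.comp (D.comp (D.gr (diag X)) (CS.rprod α β)) (D.conv (D.gr (diag Y)))

/-- Frobenius reciprocity. -/
def Frobenius (CS : CartStruct D) : Prop :=
  ∀ (X Y A : C) (f : X ⟶ Y) (α : P A X) (β : P A Y),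
    CS.meet (D.comp α (D.gr f)) β = D.comp (CS.meet α (D.comp β (D.conv (D.gr f)))) (D.gr f)

/-- The modular law. -/
def Modular (CS : CartStruct D) : Prop :=
  ∀ (A X Y : C) (α : P A X) (β : P A Y) (γ : P X Y),
    CS.meet (D.comp α γ) β ≤ D.comp (CS.meet α (D.comp β (D.conv γ))) γ

end CartStruct

/-!
Both sides are composites of graphs. The left side is `gr⟨1, π₂⟩ ; gr⟨π₁Δ, π₂⟩°`, which the
cartesian structure turns into the meet `(gr Δ° ; gr π₁°) ∧ (gr π₂ ; gr π₂°)`. Frobenius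
reciprocity (in its converse form) pulls `gr Δ°` out of the meet, after which
`gr Δ ; gr π₂ = d` collapses the second argument and `gr π₁° ∧ gr π₂° = gr Δ` is what remains.
-/

namespace RelDoctrine

variable {C : Type u} [Category.{v} C] {P : C → C → Type w} [∀ X Y : C, PartialOrder (P X Y)]
variable (D : RelDoctrine C P)

lemma conv_reidx {A X B Y : C} (f : A ⟶ X) (g : B ⟶ Y) (α : P X Y) :
    D.conv (D.reidx f g α) = D.reidx g f (D.conv α) := by
  refine le_antisymm (D.conv_reidx_le f g α) ?_
  calc D.reidx g f (D.conv α) = D.conv (D.conv (D.reidx g f (D.conv α))) := (D.conv_conv _).symm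
    _ ≤ D.conv (D.reidx f g α) :=
        D.conv_mono (by simpa only [D.conv_conv] using D.conv_reidx_le g f (D.conv α))

lemma gr_id (X : C) : D.gr (𝟙 X) = D.d X := D.reidx_id _

lemma conv_gr {X Y : C} (f : X ⟶ Y) : D.conv (D.gr f) = D.reidx (𝟙 Y) f (D.d Y) := by
  rw [gr, conv_reidx, D.conv_d]

lemma gr_comp_le_reidx {X Y B : C} (f : X ⟶ Y) (β : P Y B) :
    D.comp (D.gr f) β ≤ D.reidx f (𝟙 B) β := by
  simpa only [gr, D.reidx_id, D.d_comp] using D.comp_reidx_le f (𝟙 Y) (𝟙 B) (D.d Y) β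

lemma conv_gr_comp_reidx_le {X Y B : C} (f : X ⟶ Y) (β : P Y B) :
    D.comp (D.conv (D.gr f)) (D.reidx f (𝟙 B) β) ≤ β := by
  simpa only [D.reidx_id, D.d_comp, ← conv_gr] using D.comp_reidx_le (𝟙 Y) f (𝟙 B) (D.d Y) β

lemma reidx_id_eq_gr_comp {X Y B : C} {f : X ⟶ Y} (hf : D.Total (D.gr f)) (β : P Y B) :
    D.reidx f (𝟙 B) β = D.comp (D.gr f) β := by
  refine le_antisymm ?_ (D.gr_comp_le_reidx f β)
  calc D.reidx f (𝟙 B) β = D.comp (D.d X) (D.reidx f (𝟙 B) β) := (D.d_comp _).symm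
    _ ≤ D.comp (D.comp (D.gr f) (D.conv (D.gr f))) (D.reidx f (𝟙 B) β) := D.comp_mono hf le_rfl
    _ = D.comp (D.gr f) (D.comp (D.conv (D.gr f)) (D.reidx f (𝟙 B) β)) := (D.comp_assoc _ _ _).symm
    _ ≤ D.comp (D.gr f) β := D.comp_mono le_rfl (D.conv_gr_comp_reidx_le f β)

lemma gr_comp {X Y Z : C} {f : X ⟶ Y} (hf : D.Total (D.gr f)) (g : Y ⟶ Z) :
    D.gr (f ≫ g) = D.comp (D.gr f) (D.gr g) := by
  rw [← D.reidx_id_eq_gr_comp hf, gr, gr, ← D.reidx_comp, Category.comp_id]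

lemma total_gr_id (X : C) : D.Total (D.gr (𝟙 X)) := by
  rw [Total, D.gr_id, D.conv_d, D.d_comp]

end RelDoctrine

namespace CartStruct

variable {C : Type u} [Category.{v} C] {P : C → C → Type w} [∀ X Y : C, PartialOrder (P X Y)]
variable [HasTerminal C] [HasBinaryProducts C] {D : RelDoctrine C P} (CS : CartStruct D)

lemma rprod_gr_gr {X Y A B : C} (f : X ⟶ Y) (g : A ⟶ B) :
    CS.rprod (D.gr f) (D.gr g) = D.gr (prod.map f g) := by
  simpa only [RelDoctrine.gr, ← CS.d_rprod, prod.map_id_id] using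
    CS.rprod_natural f (𝟙 Y) g (𝟙 B) (D.d Y) (D.d B)

lemma total_gr_diag (CS : CartStruct D) (X : C) : D.Total (D.gr (diag X)) := by
  simpa only [RelDoctrine.Total, ← CS.d_rprod, D.comp_d] using CS.le_diag (D.d X)

lemma total_gr_fst (CS : CartStruct D) (X A : C) : D.Total (D.gr (prod.fst : X ⨯ A ⟶ X)) := by
  simpa only [RelDoctrine.Total, ← CS.d_rprod, D.comp_d] using CS.le_fst (D.d X) (D.d A)

lemma total_gr_map (CS : CartStruct D) {X Y A B : C} {f : X ⟶ Y} {g : A ⟶ B}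
    (hf : D.Total (D.gr f)) (hg : D.Total (D.gr g)) : D.Total (D.gr (prod.map f g)) :=
  calc D.d (X ⨯ A) = CS.rprod (D.d X) (D.d A) := CS.d_rprod X A
    _ ≤ CS.rprod (D.comp (D.gr f) (D.conv (D.gr f))) (D.comp (D.gr g) (D.conv (D.gr g))) :=
        CS.rprod_mono hf hg
    _ = D.comp (D.gr (prod.map f g)) (D.conv (D.gr (prod.map f g))) := by
        rw [← CS.rprod_comp, ← CS.rprod_conv, CS.rprod_gr_gr]

lemma gr_lift {Z X Y : C} (f : Z ⟶ X) (g : Z ⟶ Y) :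
    D.gr (prod.lift f g) = D.comp (D.gr (diag Z)) (CS.rprod (D.gr f) (D.gr g)) := by
  rw [CS.rprod_gr_gr, ← D.gr_comp (CS.total_gr_diag Z), prod.lift_map, Category.id_comp,
    Category.id_comp]

lemma gr_lift_comp_conv_gr_lift {Z W X Y : C} (f : Z ⟶ X) (g : Z ⟶ Y) (h : W ⟶ X) (k : W ⟶ Y) :
    D.comp (D.gr (prod.lift f g)) (D.conv (D.gr (prod.lift h k))) =
      CS.meet (D.comp (D.gr f) (D.conv (D.gr h))) (D.comp (D.gr g) (D.conv (D.gr k))) := by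
  rw [CS.gr_lift f g, CS.gr_lift h k, meet, ← CS.rprod_comp, ← CS.rprod_conv, D.conv_comp]
  simp only [D.comp_assoc]

lemma meet_conv_gr_conv_gr {W X : C} (h k : W ⟶ X) :
    CS.meet (D.conv (D.gr h)) (D.conv (D.gr k)) =
      D.comp (D.gr (diag X)) (D.conv (D.gr (prod.lift h k))) := by
  rw [diag, CS.gr_lift_comp_conv_gr_lift, D.gr_id, D.d_comp, D.d_comp]

lemma conv_meet {X Y : C} (α β : P X Y) :
    D.conv (CS.meet α β) = CS.meet (D.conv α) (D.conv β) := by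
  simp only [meet, D.conv_comp, D.conv_conv, CS.rprod_conv, D.comp_assoc]

variable {CS} in
/-- Frobenius reciprocity, conjugated by the converse. -/
lemma Frobenius.meet_conv_gr_comp (hF : CS.Frobenius) {X Y B : C} (f : X ⟶ Y)
    (γ : P X B) (δ : P Y B) :
    CS.meet (D.comp (D.conv (D.gr f)) γ) δ =
      D.comp (D.conv (D.gr f)) (CS.meet γ (D.comp (D.gr f) δ)) := by
  simpa only [CS.conv_meet, D.conv_comp, D.conv_conv] using
    congrArg D.conv (hF X Y B f (D.conv γ) (D.conv δ))

end CartStruct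

open CategoryTheory.Limits in
/-- In a cartesian relational doctrine satisfying Frobenius reciprocity:
`(d_X ⊠ gr Δ_X) ; (gr Δ_X ° ⊠ d_X) = gr Δ_X ° ; gr Δ_X` (modulo the associator). -/
theorem statement16 [HasTerminal C] [HasBinaryProducts C]
    (D : RelDoctrine C P) (CS : CartStruct D) (hF : CS.Frobenius) (X : C) :
    D.comp (D.comp (CS.rprod (D.d X) (D.gr (diag X)))
        (D.gr (prod.associator X X X).inv))
      (CS.rprod (D.conv (D.gr (diag X))) (D.d X)) =
      D.comp (D.conv (D.gr (diag X))) (D.gr (diag X)) := by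
  have hl : prod.map (𝟙 X) (diag X) ≫ (prod.associator X X X).inv =
      prod.lift (𝟙 (X ⨯ X)) prod.snd := by
    ext <;> simp [diag, prod.lift_fst, prod.lift_snd]
  have hr : prod.map (diag X) (𝟙 X) = prod.lift (prod.fst ≫ diag X) prod.snd := by
    ext <;> simp [diag, prod.lift_fst, prod.lift_snd]
  have hsnd : D.comp (D.gr (diag X)) (D.gr prod.snd) = D.d X := by
    rw [← D.gr_comp (CS.total_gr_diag X), diag, prod.lift_snd, D.gr_id]
  calc _ = D.comp (D.gr (prod.lift (𝟙 (X ⨯ X)) prod.snd))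
          (D.conv (D.gr (prod.lift (prod.fst ≫ diag X) prod.snd))) := by
        rw [← hl, ← hr, D.gr_comp (CS.total_gr_map (D.total_gr_id X) (CS.total_gr_diag X)),
          ← CS.rprod_gr_gr, ← CS.rprod_gr_gr, D.gr_id, CS.rprod_conv, D.conv_d]
    _ = CS.meet (D.comp (D.conv (D.gr (diag X))) (D.conv (D.gr prod.fst)))
          (D.comp (D.gr prod.snd) (D.conv (D.gr prod.snd))) := by
        rw [CS.gr_lift_comp_conv_gr_lift, D.gr_id, D.d_comp,
          D.gr_comp (CS.total_gr_fst X X), D.conv_comp]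
    _ = D.comp (D.conv (D.gr (diag X))) (CS.meet (D.conv (D.gr prod.fst))
          (D.comp (D.gr (diag X)) (D.comp (D.gr prod.snd) (D.conv (D.gr prod.snd))))) :=
        hF.meet_conv_gr_comp (diag X) _ _
    _ = D.comp (D.conv (D.gr (diag X))) (D.gr (diag X)) := by
        rw [D.comp_assoc, hsnd, D.d_comp, CS.meet_conv_gr_conv_gr, prod.lift_fst_snd, D.gr_id,
          D.conv_d, D.comp_d]
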